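/- arXiv:2604.19641 — 5 statements merged into one kernel-verified Lean document; each statement's English description precedes it below -/
import Mathlib

section
/- Suppose α > max_{r∈R} q(r) and the function y*(r) = λ·P(r)/(α − q(r)) satisfies ∑_{r∈R} y*(r) = 1, so that y* is a probability mass function with full support. Then y* maximizes the regularized objective: for every probability mass function z on R with z(r) > 0 for all r, F(z) ≤ F(y*), with equality if and only if z = y*. -/
/-!
At a point `y` with `λ P r = (α - q r) y r` for all `r` (the Lagrange condition for the constraint
`∑ y = 1`), the gap `F y - F z` for another distribution `z` equals
`λ ∑ P r (z r / y r - 1 - log (z r / y r))`: the linear terms collapse because `∑ y = ∑ z`.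
Each summand is nonnegative by `log t ≤ t - 1`, and vanishes only at `z r = y r`.
-/

open Finset Real

theorem sub_one_sub_log_nonneg {t : ℝ} (ht : 0 < t) : 0 ≤ t - 1 - log t := by
  linarith [log_le_sub_one_of_pos ht]

theorem sub_one_sub_log_eq_zero_iff {t : ℝ} (ht : 0 < t) : t - 1 - log t = 0 ↔ t = 1 := by
  refine ⟨fun h => ?_, fun h => by simp [h]⟩
  by_contra hne
  linarith [log_lt_sub_one_of_pos ht hne]

section WeightedSum

variable {ι : Type*} [Fintype ι] {w u : ι → ℝ}

theorem sum_mul_sub_one_sub_log_nonneg (hw : ∀ i, 0 ≤ w i) (hu : ∀ i, 0 < u i) :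
    0 ≤ ∑ i, w i * (u i - 1 - log (u i)) :=
  sum_nonneg fun i _ => mul_nonneg (hw i) (sub_one_sub_log_nonneg (hu i))

theorem sum_mul_sub_one_sub_log_eq_zero_iff (hw : ∀ i, 0 < w i) (hu : ∀ i, 0 < u i) :
    ∑ i, w i * (u i - 1 - log (u i)) = 0 ↔ u = 1 := by
  rw [sum_eq_zero_iff_of_nonneg fun i _ =>
    mul_nonneg (hw i).le (sub_one_sub_log_nonneg (hu i)), funext_iff]
  refine forall_congr' fun i => ?_
  simp only [mem_univ, true_implies, mul_eq_zero, (hw i).ne', false_or, Pi.one_apply]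
  exact sub_one_sub_log_eq_zero_iff (hu i)

end WeightedSum

noncomputable def klRegularizedValue {R : Type*} [Fintype R] (P q : R → ℝ) (lam : ℝ)
    (y : R → ℝ) : ℝ :=
  (∑ r, q r * y r) - lam * ∑ r, P r * log (P r / y r)

theorem klRegularizedValue_sub_eq_of_stationary {R : Type*} [Fintype R] {P q y z : R → ℝ}
    {lam α : ℝ} (hP : ∀ r, 0 < P r) (hy : ∀ r, 0 < y r) (hz : ∀ r, 0 < z r)
    (hsum : ∑ r, y r = ∑ r, z r) (hstat : ∀ r, lam * P r = (α - q r) * y r) :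
    klRegularizedValue P q lam y - klRegularizedValue P q lam z =
      lam * ∑ r, P r * (z r / y r - 1 - log (z r / y r)) := by
  have hterm : ∀ r, q r * y r - lam * (P r * log (P r / y r)) -
      (q r * z r - lam * (P r * log (P r / z r))) =
        α * (y r - z r) + lam * (P r * (z r / y r - 1 - log (z r / y r))) := by
    intro r
    have hq : q r = α - lam * P r / y r := by
      rw [hstat r, mul_div_cancel_right₀ _ (hy r).ne']; ring
    rw [hq, log_div (hP r).ne' (hz r).ne', log_div (hP r).ne' (hy r).ne',
      log_div (hz r).ne' (hy r).ne']
    have hy0 : y r ≠ 0 := (hy r).ne'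
    field_simp
    ring
  have hα : ∑ r, α * (y r - z r) = 0 := by
    rw [← mul_sum, sum_sub_distrib, hsum, sub_self, mul_zero]
  simp only [klRegularizedValue, mul_sum, ← sum_sub_distrib]
  rw [sum_congr rfl fun r _ => hterm r, sum_add_distrib, hα, zero_add]

theorem stmt2_general {R : Type*} [Fintype R] [Nonempty R]
    (P : R → ℝ) (hPpos : ∀ r, 0 < P r)
    (q : R → ℝ) (lam : ℝ) (hlam : 0 < lam)
    (F : (R → ℝ) → ℝ)
    (hF : ∀ y : R → ℝ,
      F y = (∑ r, q r * y r) - lam * ∑ r, P r * Real.log (P r / y r))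
    (α : ℝ) (hα : Finset.univ.sup' Finset.univ_nonempty q < α)
    (ystar : R → ℝ) (hystar : ∀ r, ystar r = lam * P r / (α - q r))
    (hystarsum : ∑ r, ystar r = 1)
    (z : R → ℝ) (hzpos : ∀ r, 0 < z r) (hzsum : ∑ r, z r = 1) :
    F z ≤ F ystar ∧ (F z = F ystar ↔ z = ystar) := by
  have hqα : ∀ r, 0 < α - q r := fun r => sub_pos.2 ((le_sup' q (mem_univ r)).trans_lt hα)
  have hypos : ∀ r, 0 < ystar r := fun r => by
    rw [hystar r]; exact div_pos (mul_pos hlam (hPpos r)) (hqα r)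
  have hstat : ∀ r, lam * P r = (α - q r) * ystar r := fun r => by
    rw [hystar r, mul_div_cancel₀ _ (hqα r).ne']
  have hratio : ∀ r, 0 < z r / ystar r := fun r => div_pos (hzpos r) (hypos r)
  have hgap : F ystar - F z = lam * ∑ r, P r * (z r / ystar r - 1 - log (z r / ystar r)) := by
    rw [hF, hF]
    exact klRegularizedValue_sub_eq_of_stationary hPpos hypos hzpos
      (hystarsum.trans hzsum.symm) hstat
  have hnonneg := sum_mul_sub_one_sub_log_nonneg (fun r => (hPpos r).le) hratio
  refine ⟨by nlinarith, ?_⟩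
  calc F z = F ystar
      ↔ ∑ r, P r * (z r / ystar r - 1 - log (z r / ystar r)) = 0 := by
        rw [eq_comm, ← sub_eq_zero, hgap, mul_eq_zero, or_iff_right hlam.ne']
    _ ↔ (fun r => z r / ystar r) = 1 := sum_mul_sub_one_sub_log_eq_zero_iff hPpos hratio
    _ ↔ z = ystar := by
        simp only [funext_iff, Pi.one_apply, div_eq_one_iff_eq (hypos _).ne']

/-- If `α > max q` and `y*(r) = λ·P(r)/(α − q(r))` sums to 1, then `y*` is a
full-support probability mass function maximizing the regularized objective `F`, with
equality `F(z) = F(y*)` iff `z = y*`. -/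
theorem stmt2 {R : Type*} [Fintype R] [Nonempty R]
    (P : R → ℝ) (hPpos : ∀ r, 0 < P r) (hPsum : ∑ r, P r = 1)
    (q : R → ℝ) (lam : ℝ) (hlam : 0 < lam)
    (F : (R → ℝ) → ℝ)
    (hF : ∀ y : R → ℝ,
      F y = (∑ r, q r * y r) - lam * ∑ r, P r * Real.log (P r / y r))
    (α : ℝ) (hα : Finset.univ.sup' Finset.univ_nonempty q < α)
    (ystar : R → ℝ) (hystar : ∀ r, ystar r = lam * P r / (α - q r))
    (hystarsum : ∑ r, ystar r = 1)
    (z : R → ℝ) (hzpos : ∀ r, 0 < z r) (hzsum : ∑ r, z r = 1) :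
    F z ≤ F ystar ∧ (F z = F ystar ↔ z = ystar) :=
  stmt2_general P hPpos q lam hlam F hF α hα ystar hystar hystarsum z hzpos hzsum
end

section
/- Suppose α > max_{r∈R} q(r) and y*(r) = λ·P(r)/(α − q(r)) satisfies ∑_{r∈R} y*(r) = 1. Then the value attained at y* is F(y*) = α − λ − λ·∑_{r∈R} P(r)·log((α − q(r))/λ). -/
theorem Finset.sum_mul_eq_sub_of_sub_mul_eq {ι K : Type*} [CommRing K] (s : Finset ι)
    {q y b : ι → K} {α : K} (hy : ∀ i ∈ s, (α - q i) * y i = b i) :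
    ∑ i ∈ s, q i * y i = α * ∑ i ∈ s, y i - ∑ i ∈ s, b i := by
  rw [Finset.mul_sum, ← Finset.sum_sub_distrib]
  refine Finset.sum_congr rfl fun i hi => ?_
  linear_combination -(hy i hi)

theorem stmt3_general {R : Type*} [Fintype R] [Nonempty R]
    (P : R → ℝ) (hPpos : ∀ r, 0 < P r) (hPsum : ∑ r, P r = 1)
    (q : R → ℝ) (lam : ℝ)
    (F : (R → ℝ) → ℝ)
    (hF : ∀ y : R → ℝ,
      F y = (∑ r, q r * y r) - lam * ∑ r, P r * Real.log (P r / y r))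
    (α : ℝ) (hα : Finset.univ.sup' Finset.univ_nonempty q < α)
    (ystar : R → ℝ) (hystar : ∀ r, ystar r = lam * P r / (α - q r))
    (hystarsum : ∑ r, ystar r = 1) :
    F ystar = α - lam - lam * ∑ r, P r * Real.log ((α - q r) / lam) := by
  have hgap : ∀ r, α - q r ≠ 0 := fun r =>
    (sub_pos.2 ((Finset.sup'_lt_iff _).1 hα r (Finset.mem_univ r))).ne'
  have hweight : ∀ r ∈ Finset.univ, (α - q r) * ystar r = lam * P r := fun r _ => by
    rw [hystar, mul_div_cancel₀ _ (hgap r)]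
  have hlinear : ∑ r, q r * ystar r = α - lam := by
    rw [Finset.univ.sum_mul_eq_sub_of_sub_mul_eq hweight, hystarsum, ← Finset.mul_sum, hPsum,
      mul_one, mul_one]
  have hratio : ∀ r, P r / ystar r = (α - q r) / lam := fun r => by
    rw [hystar, div_div_eq_mul_div, mul_comm lam, mul_div_mul_left _ _ (hPpos r).ne']
  rw [hF, hlinear]
  simp only [hratio]

/-- If `α > max q` and `y*(r) = λ·P(r)/(α − q(r))` sums to 1, then the value
attained at `y*` is `F(y*) = α − λ − λ·∑ r, P(r)·log((α − q(r))/λ)`. -/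
theorem stmt3 {R : Type*} [Fintype R] [Nonempty R]
    (P : R → ℝ) (hPpos : ∀ r, 0 < P r) (hPsum : ∑ r, P r = 1)
    (q : R → ℝ) (lam : ℝ) (hlam : 0 < lam)
    (F : (R → ℝ) → ℝ)
    (hF : ∀ y : R → ℝ,
      F y = (∑ r, q r * y r) - lam * ∑ r, P r * Real.log (P r / y r))
    (α : ℝ) (hα : Finset.univ.sup' Finset.univ_nonempty q < α)
    (ystar : R → ℝ) (hystar : ∀ r, ystar r = lam * P r / (α - q r))
    (hystarsum : ∑ r, ystar r = 1) :
    F ystar = α - lam - lam * ∑ r, P r * Real.log ((α - q r) / lam) :=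
  stmt3_general P hPpos hPsum q lam F hF α hα ystar hystar hystarsum
end

section
/- For every probability mass function x on H, the regularized objective satisfies G(x) ≤ τ·log(∑_{h∈H} P_H(h)·exp(U(h)/τ)). -/
/-! Substituting `q h = P_H(h)·exp(U(h)/τ)` turns `G(x)` into `τ·∑_{x(h)>0} x(h)·log(q(h)/x(h))`,
which by Jensen's inequality for the concave `log` (weights `x(h)`) is at most
`τ·log ∑_{x(h)>0} q(h) ≤ τ·log ∑_h q(h)`. -/

open Finset Real

lemma Real.sum_mul_log_div_le_log_sum {ι : Type*} (s : Finset ι) (w q : ι → ℝ)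
    (hw : ∀ i ∈ s, 0 < w i) (hw₁ : ∑ i ∈ s, w i = 1) (hq : ∀ i ∈ s, 0 < q i) :
    ∑ i ∈ s, w i * log (q i / w i) ≤ log (∑ i ∈ s, q i) := by
  have hJensen := strictConcaveOn_log_Ioi.concaveOn.le_map_sum (fun i hi => (hw i hi).le) hw₁
    (p := fun i => q i / w i) fun i hi => div_pos (hq i hi) (hw i hi)
  refine hJensen.trans_eq (congrArg log (sum_congr rfl fun i hi => ?_))
  simp only [smul_eq_mul]
  field_simp [(hw i hi).ne']

lemma Real.sum_filter_pos_mul_log_div_le_log_sum {ι : Type*} [Fintype ι] (x q : ι → ℝ)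
    (hx : ∀ i, 0 ≤ x i) (hx₁ : ∑ i, x i = 1) (hq : ∀ i, 0 < q i) :
    ∑ i ∈ univ.filter (fun i => 0 < x i), x i * log (q i / x i) ≤ log (∑ i, q i) := by
  set s := univ.filter (fun i => 0 < x i)
  have hs₁ : ∑ i ∈ s, x i = 1 := by
    rw [← hx₁, sum_filter_of_ne fun i _ hi => (hx i).lt_of_ne' hi]
  have hs : s.Nonempty := nonempty_of_sum_ne_zero (by rw [hs₁]; exact one_ne_zero)
  calc ∑ i ∈ s, x i * log (q i / x i)
      ≤ log (∑ i ∈ s, q i) :=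
        sum_mul_log_div_le_log_sum s x q (fun i hi => (mem_filter.1 hi).2) hs₁ fun i _ => hq i
    _ ≤ log (∑ i, q i) :=
        log_le_log (sum_pos (fun i _ => hq i) hs)
          (sum_le_sum_of_subset_of_nonneg (subset_univ s) fun i _ _ => (hq i).le)

theorem stmt4_general {H : Type*} [Fintype H]
    (PH : H → ℝ) (hPHpos : ∀ h, 0 < PH h)
    (U : H → ℝ) (τ : ℝ) (hτ : 0 < τ)
    (x : H → ℝ) (hxnonneg : ∀ h, 0 ≤ x h) (hxsum : ∑ h, x h = 1) :
    (∑ h, U h * x h) -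
        τ * ∑ h ∈ Finset.univ.filter (fun h => 0 < x h),
              x h * Real.log (x h / PH h) ≤
      τ * Real.log (∑ h, PH h * Real.exp (U h / τ)) := by
  set q : H → ℝ := fun h => PH h * exp (U h / τ)
  have hq : ∀ h, 0 < q h := fun h => mul_pos (hPHpos h) (exp_pos _)
  have hU : ∑ h, U h * x h = ∑ h ∈ univ.filter (fun h => 0 < x h), U h * x h :=
    (sum_filter_of_ne fun h _ hh => (hxnonneg h).lt_of_ne' (right_ne_zero_of_mul hh)).symm
  have hG : (∑ h, U h * x h) - τ * ∑ h ∈ univ.filter (fun h => 0 < x h), x h * log (x h / PH h)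
      = τ * ∑ h ∈ univ.filter (fun h => 0 < x h), x h * log (q h / x h) := by
    rw [hU, mul_sum, mul_sum, ← sum_sub_distrib]
    refine sum_congr rfl fun h hh => ?_
    have hx := (mem_filter.1 hh).2
    rw [log_div (hq h).ne' hx.ne', log_div hx.ne' (hPHpos h).ne',
      log_mul (hPHpos h).ne' (exp_pos _).ne', log_exp]
    field_simp
    ring
  rw [hG]
  exact mul_le_mul_of_nonneg_left
    (sum_filter_pos_mul_log_div_le_log_sum x q hxnonneg hxsum hq) hτ.le

/-- For every probability mass function `x` on `H`, the regularized objective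
`G(x) = ∑ h, U(h)·x(h) − τ·KL(x‖P_H)` satisfies
`G(x) ≤ τ·log (∑ h, P_H(h)·exp (U(h)/τ))`, where
`KL(x‖P_H) = ∑_{h : x(h) > 0} x(h)·log (x(h)/P_H(h))`. -/
theorem stmt4 {H : Type*} [Fintype H] [Nonempty H]
    (PH : H → ℝ) (hPHpos : ∀ h, 0 < PH h) (hPHsum : ∑ h, PH h = 1)
    (U : H → ℝ) (τ : ℝ) (hτ : 0 < τ)
    (x : H → ℝ) (hxnonneg : ∀ h, 0 ≤ x h) (hxsum : ∑ h, x h = 1) :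
    (∑ h, U h * x h) -
        τ * ∑ h ∈ Finset.univ.filter (fun h => 0 < x h),
              x h * Real.log (x h / PH h) ≤
      τ * Real.log (∑ h, PH h * Real.exp (U h / τ)) :=
  stmt4_general PH hPHpos U τ hτ x hxnonneg hxsum
end

section
/- Suppose for each h ∈ H there exists α(h) > max_{r∈R} q(h,r) with ∑_{r∈R} λ(h)·P_R(h,r)/(α(h) − q(h,r)) = 1; define y*_h(r) = λ(h)·P_R(h,r)/(α(h) − q(h,r)), U(h) = α(h) − λ(h) − λ(h)·∑_{r∈R} P_R(h,r)·log((α(h) − q(h,r))/λ(h)), and x*(h) = P_H(h)·exp(U(h)/τ) / ∑_{h'∈H} P_H(h')·exp(U(h')/τ). Then for every probability mass function x on H and every family (z_h)_{h∈H} of probability mass functions on R with z_h(r) > 0 for all r, the hierarchically regularized objective satisfies ∑_{h∈H} x(h)·(∑_{r∈R} q(h,r)·z_h(r) − λ(h)·∑_{r∈R} P_R(h,r)·log(P_R(h,r)/z_h(r))) − τ·KL(x‖P_H) ≤ τ·log(∑_{h∈H} P_H(h)·exp(U(h)/τ)), with equality when x = x* and z_h = y*_h for all h. -/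
/-!
For fixed `h`, the inner objective `z ↦ ∑ q z - λ ∑ P_R log (P_R / z)` is concave, and `y*_h`
satisfies the stationarity condition `λ P_R = (α - q) y*_h`, where `α` is the multiplier of
the constraint `∑ z = 1`; so the objective lies below its tangent at `y*_h`, whose slope `α`
is constant along the simplex. Its maximum `U(h)` is then attained for every `h` at once,
and the outer problem `x ↦ ∑ x U - τ KL(x ‖ P_H)` is the Gibbs variational problem, whose
value is the log-partition function `τ log ∑ P_H exp (U / τ)`, attained at the Gibbs
distribution `x*`.
-/

open Finset Real

section Inner

variable {R : Type*} [Fintype R]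

noncomputable def innerValue (q p : R → ℝ) (lam : ℝ) (z : R → ℝ) : ℝ :=
  ∑ r, q r * z r - lam * ∑ r, p r * log (p r / z r)

lemma mul_sub_mul_log_div_le_tangent {q p c α y z : ℝ} (hp : 0 < p) (hy : 0 < y) (hz : 0 < z)
    (hc : 0 ≤ c) (hstat : c = (α - q) * y) :
    q * z - c * log (p / z) ≤ q * y - c * log (p / y) + α * (z - y) := by
  have hlog : c * log (p / y) - c * log (p / z) = c * log (z / y) := by
    rw [log_div hp.ne' hy.ne', log_div hp.ne' hz.ne', log_div hz.ne' hy.ne']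
    ring
  have htangent : c * log (z / y) ≤ (α - q) * (z - y) :=
    calc c * log (z / y) ≤ c * (z / y - 1) :=
          mul_le_mul_of_nonneg_left (log_le_sub_one_of_pos (div_pos hz hy)) hc
      _ = (α - q) * (z - y) := by rw [hstat]; field_simp
  linear_combination hlog + htangent

lemma innerValue_le_of_stationary {q p y z : R → ℝ} {lam α : ℝ} (hlam : 0 ≤ lam)
    (hp : ∀ r, 0 < p r) (hy : ∀ r, 0 < y r) (hz : ∀ r, 0 < z r)
    (hstat : ∀ r, lam * p r = (α - q r) * y r) (hsum : ∑ r, z r = ∑ r, y r) :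
    innerValue q p lam z ≤ innerValue q p lam y := by
  calc innerValue q p lam z = ∑ r, (q r * z r - lam * p r * log (p r / z r)) := by
        simp only [innerValue, mul_sum, sum_sub_distrib, mul_assoc]
    _ ≤ ∑ r, (q r * y r - lam * p r * log (p r / y r) + α * (z r - y r)) :=
        sum_le_sum fun r _ => mul_sub_mul_log_div_le_tangent (hp r) (hy r) (hz r)
          (mul_nonneg hlam (hp r).le) (hstat r)
    _ = innerValue q p lam y := by
        rw [sum_add_distrib, ← mul_sum, sum_sub_distrib z y, hsum, sub_self, mul_zero, add_zero]
        simp only [innerValue, mul_sum, sum_sub_distrib, mul_assoc]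

lemma innerValue_of_stationary {q p y : R → ℝ} {lam α : ℝ} (hlam : 0 < lam)
    (hy : ∀ r, 0 < y r) (hstat : ∀ r, lam * p r = (α - q r) * y r) :
    innerValue q p lam y
      = α * ∑ r, y r - lam * ∑ r, p r - lam * ∑ r, p r * log ((α - q r) / lam) := by
  have hratio : ∀ r, p r / y r = (α - q r) / lam := fun r => by
    rw [div_eq_div_iff (hy r).ne' hlam.ne', mul_comm, hstat, mul_comm]
  have hlinear : ∑ r, q r * y r = α * ∑ r, y r - lam * ∑ r, p r := by
    rw [mul_sum, mul_sum, ← sum_sub_distrib]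
    exact sum_congr rfl fun r _ => by linarith [hstat r]
  simp only [innerValue, hratio, hlinear]

end Inner

section Gibbs

variable {H : Type*} [Fintype H]

lemma sum_filter_pos_mul {x g : H → ℝ} (hx : ∀ h, 0 ≤ x h) :
    ∑ h ∈ univ.filter (fun h => 0 < x h), x h * g h = ∑ h, x h * g h :=
  sum_filter_of_ne fun h _ hne => (hx h).lt_of_ne (left_ne_zero_of_mul hne).symm

lemma sum_mul_exp_pos {p V : H → ℝ} (hp : ∀ h, 0 < p h) (h : H) :
    0 < ∑ i, p i * exp (V i) :=
  sum_pos (fun i _ => mul_pos (hp i) (exp_pos _)) ⟨h, mem_univ h⟩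

lemma gibbs_variational_le {p U x : H → ℝ} {τ : ℝ} (hτ : 0 < τ)
    (hp : ∀ h, 0 < p h) (hx : ∀ h, 0 ≤ x h) (hx1 : ∑ h, x h = 1) :
    ∑ h, x h * U h - τ * ∑ h, x h * log (x h / p h)
      ≤ τ * log (∑ h, p h * exp (U h / τ)) := by
  set w := fun h => p h * exp (U h / τ)
  set Z := ∑ h, w h
  have hw : ∀ h, 0 < w h := fun h => mul_pos (hp h) (exp_pos _)
  have hterm : ∀ h, x h * U h - τ * (x h * log (x h / p h))
      ≤ τ * (w h / Z - x h) + τ * log Z * x h := by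
    intro h
    have hZ : 0 < Z := sum_mul_exp_pos hp h
    rcases (hx h).eq_or_lt with hxh | hxh
    · rw [← hxh]; simp only [zero_mul, mul_zero, sub_zero, add_zero]
      exact mul_nonneg hτ.le (div_pos (hw h) hZ).le
    have hlog : U h / τ - log (x h / p h) - log Z = log (w h / (x h * Z)) := by
      rw [log_div (hw h).ne' (mul_pos hxh hZ).ne', log_mul (hp h).ne' (exp_pos _).ne', log_exp,
        log_mul hxh.ne' hZ.ne', log_div hxh.ne' (hp h).ne']
      ring
    have hgibbs : x h * log (w h / (x h * Z)) ≤ w h / Z - x h :=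
      calc x h * log (w h / (x h * Z)) ≤ x h * (w h / (x h * Z) - 1) := by
            gcongr
            exact log_le_sub_one_of_pos (div_pos (hw h) (mul_pos hxh hZ))
        _ = w h / Z - x h := by field_simp
    calc x h * U h - τ * (x h * log (x h / p h))
        = τ * (x h * log (w h / (x h * Z))) + τ * log Z * x h := by
          rw [← hlog]; field_simp; ring
      _ ≤ τ * (w h / Z - x h) + τ * log Z * x h := by gcongr
  have hmass : ∑ h, w h / Z ≤ 1 := by rw [← sum_div]; exact div_self_le_one Z
  calc ∑ h, x h * U h - τ * ∑ h, x h * log (x h / p h)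
      = ∑ h, (x h * U h - τ * (x h * log (x h / p h))) := by rw [mul_sum, sum_sub_distrib]
    _ ≤ ∑ h, (τ * (w h / Z - x h) + τ * log Z * x h) := sum_le_sum fun h _ => hterm h
    _ = τ * (∑ h, w h / Z - 1) + τ * log Z := by
      rw [sum_add_distrib, ← mul_sum, ← mul_sum, sum_sub_distrib, hx1, mul_one]
    _ ≤ τ * log Z := add_le_of_nonpos_left (mul_nonpos_of_nonneg_of_nonpos hτ.le (by linarith))

lemma gibbs_variational_eq {p U x : H → ℝ} {τ : ℝ} (hτ : τ ≠ 0) (hp : ∀ h, 0 < p h)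
    (hx : ∀ h, x h = p h * exp (U h / τ) / ∑ h', p h' * exp (U h' / τ)) :
    ∑ h, x h * U h - τ * ∑ h, x h * log (x h / p h)
      = τ * log (∑ h, p h * exp (U h / τ)) := by
  set Z := ∑ h, p h * exp (U h / τ)
  have hterm : ∀ h, x h * U h - τ * (x h * log (x h / p h)) = τ * log Z * x h := by
    intro h
    have hZ : 0 < Z := sum_mul_exp_pos hp h
    have hratio : x h / p h = exp (U h / τ) / Z := by
      rw [hx]; field_simp [(hp h).ne']
    rw [hratio, log_div (exp_pos _).ne' hZ.ne', log_exp]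
    field_simp
    ring
  rw [mul_sum, ← sum_sub_distrib, sum_congr rfl fun h _ => hterm h, ← mul_sum,
    sum_congr rfl fun h _ => hx h, ← sum_div]
  rcases eq_or_ne Z 0 with hZ | hZ
  · simp [hZ]
  · rw [div_self hZ, mul_one]

end Gibbs

theorem stmt7_general {H R : Type*} [Fintype H] [Fintype R] [Nonempty R]
    (PH : H → ℝ) (hPHpos : ∀ h, 0 < PH h)
    (PR : H → R → ℝ) (hPRpos : ∀ h r, 0 < PR h r) (hPRsum : ∀ h, ∑ r, PR h r = 1)
    (q : H → R → ℝ) (lam : H → ℝ) (hlam : ∀ h, 0 < lam h)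
    (τ : ℝ) (hτ : 0 < τ)
    (KL : (H → ℝ) → ℝ)
    (hKL : ∀ x : H → ℝ,
      KL x = ∑ h ∈ Finset.univ.filter (fun h => 0 < x h),
               x h * Real.log (x h / PH h))
    (α : H → ℝ)
    (hαgt : ∀ h, Finset.univ.sup' Finset.univ_nonempty (q h) < α h)
    (hαsum : ∀ h, ∑ r, lam h * PR h r / (α h - q h r) = 1)
    (ystar : H → R → ℝ)
    (hystar : ∀ h r, ystar h r = lam h * PR h r / (α h - q h r))
    (U : H → ℝ)
    (hU : ∀ h, U h = α h - lam h
        - lam h * ∑ r, PR h r * Real.log ((α h - q h r) / lam h))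
    (xstar : H → ℝ)
    (hxstar : ∀ h, xstar h =
      PH h * Real.exp (U h / τ) / ∑ h', PH h' * Real.exp (U h' / τ)) :
    (∀ (x : H → ℝ) (z : H → R → ℝ),
      (∀ h, 0 ≤ x h) → (∑ h, x h = 1) →
      (∀ h r, 0 < z h r) → (∀ h, ∑ r, z h r = 1) →
      (∑ h, x h * ((∑ r, q h r * z h r)
          - lam h * ∑ r, PR h r * Real.log (PR h r / z h r))) - τ * KL x ≤
        τ * Real.log (∑ h, PH h * Real.exp (U h / τ))) ∧
    (∑ h, xstar h * ((∑ r, q h r * ystar h r)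
        - lam h * ∑ r, PR h r * Real.log (PR h r / ystar h r))) - τ * KL xstar =
      τ * Real.log (∑ h, PH h * Real.exp (U h / τ)) := by
  have hαq : ∀ h r, q h r < α h := fun h r =>
    (le_sup' (q h) (mem_univ r)).trans_lt (hαgt h)
  have hypos : ∀ h r, 0 < ystar h r := fun h r => by
    rw [hystar]; exact div_pos (mul_pos (hlam h) (hPRpos h r)) (sub_pos.2 (hαq h r))
  have hstat : ∀ h r, lam h * PR h r = (α h - q h r) * ystar h r := fun h r => by
    rw [hystar, mul_div_cancel₀ _ (sub_pos.2 (hαq h r)).ne']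
  have hysum : ∀ h, ∑ r, ystar h r = 1 := fun h => by simpa only [hystar] using hαsum h
  have hvalue : ∀ h, innerValue (q h) (PR h) (lam h) (ystar h) = U h := fun h => by
    rw [innerValue_of_stationary (hlam h) (hypos h) (hstat h), hysum, hPRsum, hU, mul_one, mul_one]
  have hKLsum : ∀ x, (∀ h, 0 ≤ x h) → KL x = ∑ h, x h * log (x h / PH h) := fun x hx =>
    (hKL x).trans (sum_filter_pos_mul hx)
  constructor
  · intro x z hx hx1 hz hz1
    calc _ ≤ ∑ h, x h * U h - τ * KL x := by
          refine sub_le_sub_right (sum_le_sum fun h _ => mul_le_mul_of_nonneg_left ?_ (hx h)) _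
          rw [← hvalue h]
          exact innerValue_le_of_stationary (hlam h).le (hPRpos h) (hypos h) (hz h) (hstat h)
            ((hz1 h).trans (hysum h).symm)
      _ ≤ _ := by
          rw [hKLsum x hx]
          exact gibbs_variational_le hτ hPHpos hx hx1
  · have hxstar_pos : ∀ h, 0 < xstar h := fun h => by
      rw [hxstar]
      exact div_pos (mul_pos (hPHpos h) (exp_pos _)) (sum_mul_exp_pos hPHpos h)
    simp only [← innerValue.eq_def, hvalue]
    rw [hKLsum xstar fun h => (hxstar_pos h).le]
    exact gibbs_variational_eq hτ.ne' hPHpos hxstar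

/-- With the rate-normalized inner optimizers `y*_h`, values `U(h)` and the
Gibbs outer optimizer `x*`, the hierarchically regularized objective is bounded by
`τ·log (∑ h, P_H(h)·exp(U(h)/τ))` over all `(x, (z_h))`, with equality at
`(x*, (y*_h))`. -/
theorem stmt7 {H R : Type*} [Fintype H] [Nonempty H] [Fintype R] [Nonempty R]
    (PH : H → ℝ) (hPHpos : ∀ h, 0 < PH h) (hPHsum : ∑ h, PH h = 1)
    (PR : H → R → ℝ) (hPRpos : ∀ h r, 0 < PR h r) (hPRsum : ∀ h, ∑ r, PR h r = 1)
    (q : H → R → ℝ) (lam : H → ℝ) (hlam : ∀ h, 0 < lam h)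
    (τ : ℝ) (hτ : 0 < τ)
    (KL : (H → ℝ) → ℝ)
    (hKL : ∀ x : H → ℝ,
      KL x = ∑ h ∈ Finset.univ.filter (fun h => 0 < x h),
               x h * Real.log (x h / PH h))
    (α : H → ℝ)
    (hαgt : ∀ h, Finset.univ.sup' Finset.univ_nonempty (q h) < α h)
    (hαsum : ∀ h, ∑ r, lam h * PR h r / (α h - q h r) = 1)
    (ystar : H → R → ℝ)
    (hystar : ∀ h r, ystar h r = lam h * PR h r / (α h - q h r))
    (U : H → ℝ)
    (hU : ∀ h, U h = α h - lam h
        - lam h * ∑ r, PR h r * Real.log ((α h - q h r) / lam h))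
    (xstar : H → ℝ)
    (hxstar : ∀ h, xstar h =
      PH h * Real.exp (U h / τ) / ∑ h', PH h' * Real.exp (U h' / τ)) :
    (∀ (x : H → ℝ) (z : H → R → ℝ),
      (∀ h, 0 ≤ x h) → (∑ h, x h = 1) →
      (∀ h r, 0 < z h r) → (∀ h, ∑ r, z h r = 1) →
      (∑ h, x h * ((∑ r, q h r * z h r)
          - lam h * ∑ r, PR h r * Real.log (PR h r / z h r))) - τ * KL x ≤
        τ * Real.log (∑ h, PH h * Real.exp (U h / τ))) ∧
    (∑ h, xstar h * ((∑ r, q h r * ystar h r)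
        - lam h * ∑ r, PR h r * Real.log (PR h r / ystar h r))) - τ * KL xstar =
      τ * Real.log (∑ h, PH h * Real.exp (U h / τ)) :=
  stmt7_general PH hPHpos PR hPRpos hPRsum q lam hlam τ hτ KL hKL α hαgt hαsum ystar hystar U hU
    xstar hxstar
end

section
/- FPFS slot allocation complies with the imposed entry rate: if the slot spacing is σ = 60/τ for a positive natural number τ, then for every real number a, the number of indices j ∈ {1,…,N} with assigned entry time ê_j ∈ [a, a + 60) is at most τ; that is, at most τ regulated flights enter the control volume in any rolling 60-minute window. -/
/-!
Slot times form the lattice `s₀ + σℤ`, and a half-open window of length `τσ = 60` contains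
exactly `τ` lattice points. The FPFS recursion makes the slot indices `m_j` strictly
increasing, so distinct flights occupy distinct slots and at most `τ` of them fall in the
window.
-/

open Finset

theorem add_int_mul_mem_Ico_iff {s₀ σ a : ℝ} (hσ : 0 < σ) (k : ℤ) (n : ℕ) :
    s₀ + k * σ ∈ Set.Ico a (a + n * σ) ↔
      k ∈ Set.Ico ⌈(a - s₀) / σ⌉ (⌈(a - s₀) / σ⌉ + n) := by
  have hlow : a ≤ s₀ + k * σ ↔ ⌈(a - s₀) / σ⌉ ≤ k := by
    rw [Int.ceil_le, div_le_iff₀ hσ]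
    constructor <;> intro h <;> linarith
  have hhigh : s₀ + k * σ < a + n * σ ↔ k < ⌈(a - s₀) / σ⌉ + n := by
    rw [← sub_lt_iff_lt_add (a := k), Int.lt_ceil, lt_div_iff₀ hσ]
    push_cast
    constructor <;> intro h <;> linarith
  simp only [Set.mem_Ico, hlow, hhigh]

theorem card_filter_add_int_mul_mem_Ico_le {ι : Type*} (s : Finset ι) (f : ι → ℤ)
    (hf : Set.InjOn f s) {s₀ σ : ℝ} (hσ : 0 < σ) (a : ℝ) (n : ℕ) :
    #{j ∈ s | s₀ + f j * σ ∈ Set.Ico a (a + n * σ)} ≤ n := by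
  set c := ⌈(a - s₀) / σ⌉
  calc #{j ∈ s | s₀ + f j * σ ∈ Set.Ico a (a + n * σ)}
      ≤ #(Ico c (c + n)) := by
        refine card_le_card_of_injOn f (fun j hj => ?_) (hf.mono fun j hj => ?_)
        · rw [mem_coe, mem_filter, add_int_mul_mem_Ico_iff hσ] at hj
          rw [coe_Ico]
          exact hj.2
        · exact (mem_filter.mp hj).1
    _ = n := by simp

theorem strictMonoOn_Iic_of_eq_max_add_one {N : ℕ} {m g : ℕ → ℤ}
    (hm : ∀ j, 1 ≤ j → j ≤ N → m j = max (m (j - 1) + 1) (g j)) :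
    StrictMonoOn m (Set.Iic N) := by
  refine strictMonoOn_Iic_of_lt_succ fun k hk => ?_
  rw [Order.succ_eq_add_one, hm (k + 1) (by omega) hk, Nat.add_sub_cancel]
  exact Int.lt_of_add_one_le (le_max_left _ _)

theorem stmt14_general (N : ℕ) (s0 : ℝ) (τ : ℕ) (hτ : 1 ≤ τ)
    (σ : ℝ) (hσ : σ = 60 / (τ : ℝ))
    (e : ℕ → ℝ)
    (m : ℕ → ℤ)
    (hm : ∀ j, 1 ≤ j → j ≤ N → m j = max (m (j - 1) + 1) ⌈(e j - s0) / σ⌉) :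
    ∀ a : ℝ,
      ((Finset.Icc 1 N).filter
        (fun j => s0 + (m j : ℝ) * σ ∈ Set.Ico a (a + 60))).card ≤ τ := by
  intro a
  have hτpos : (0 : ℝ) < τ := by exact_mod_cast hτ
  have hσpos : 0 < σ := hσ ▸ div_pos (by norm_num) hτpos
  have hwindow : (60 : ℝ) = τ * σ := by rw [hσ]; field_simp
  have hinj : Set.InjOn m (Icc 1 N : Finset ℕ) :=
    ((strictMonoOn_Iic_of_eq_max_add_one hm).injOn).mono fun j hj => (mem_Icc.mp hj).2
  rw [hwindow]
  exact card_filter_add_int_mul_mem_Ico_le _ m hinj hσpos a τ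

/-- FPFS slot allocation complies with the imposed hourly entry rate: with
slot spacing `σ = 60/τ` for a positive natural number `τ`, for every real `a` the number
of indices `j ∈ {1,…,N}` whose assigned entry time `ê_j = s_0 + m_j·σ` lies in
`[a, a + 60)` is at most `τ`. -/
theorem stmt14 (N : ℕ) (s0 : ℝ) (τ : ℕ) (hτ : 1 ≤ τ)
    (σ : ℝ) (hσ : σ = 60 / (τ : ℝ))
    (e : ℕ → ℝ) (hmono : ∀ j k, 1 ≤ j → j ≤ k → k ≤ N → e j ≤ e k)
    (m : ℕ → ℤ) (hm0 : m 0 = -1)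
    (hm : ∀ j, 1 ≤ j → j ≤ N → m j = max (m (j - 1) + 1) ⌈(e j - s0) / σ⌉) :
    ∀ a : ℝ,
      ((Finset.Icc 1 N).filter
        (fun j => s0 + (m j : ℝ) * σ ∈ Set.Ico a (a + 60))).card ≤ τ :=
  stmt14_general N s0 τ hτ σ hσ e m hm
end
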